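/- For all integers n, m ≥ 2, the complete bipartite graph K_{n,m} satisfies χ_{vi,1}(K_{n,m}) = n + m. -/

import Mathlib

open SimpleGraph

variable {V : Type*}

/-- An *incidence* of `G`: a pair `(v, e)` where `e` is an edge of `G` and `v ∈ e`. -/
abbrev Inc (G : SimpleGraph V) : Type _ :=
  {p : V × Sym2 V // p.2 ∈ G.edgeSet ∧ p.1 ∈ p.2}

/-- The elements to be colored in a vi-simultaneous coloring: vertices together with
incidences. -/
abbrev VIElem (G : SimpleGraph V) : Type _ := V ⊕ Inc G

/-- Adjacency between elements of `V(G) ∪ I(G)`: two vertices are adjacent when they are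
adjacent in `G`; a vertex `u` and an incidence `(w, f)` are adjacent when `u ∈ f`; two
distinct incidences `(v, e)`, `(w, f)` are adjacent when `v = w`, or `e = f`, or
`{v, w} = e`, or `{v, w} = f`. -/
def VIAdj (G : SimpleGraph V) : VIElem G → VIElem G → Prop
  | Sum.inl u, Sum.inl w => G.Adj u w
  | Sum.inl u, Sum.inr i => u ∈ i.1.2
  | Sum.inr i, Sum.inl u => u ∈ i.1.2
  | Sum.inr i, Sum.inr j => i ≠ j ∧
      (i.1.1 = j.1.1 ∨ i.1.2 = j.1.2 ∨ s(i.1.1, j.1.1) = i.1.2 ∨ s(i.1.1, j.1.1) = j.1.2)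

/-- A vi-simultaneous proper `k`-coloring of `G`: adjacent or incident elements of
`V(G) ∪ I(G)` receive distinct colors. -/
def IsVIColoring (G : SimpleGraph V) {k : ℕ} (c : VIElem G → Fin k) : Prop :=
  ∀ a b, VIAdj G a b → c a ≠ c b

/-- The vi-simultaneous chromatic number `χ_vi(G)`: the least `k` admitting a
vi-simultaneous proper `k`-coloring. -/
noncomputable def chiVI (G : SimpleGraph V) : ℕ :=
  sInf {k | ∃ c : VIElem G → Fin k, IsVIColoring G c}

/-- `I₂(v)`: the set of second incidences of a vertex `v`, i.e. incidences `(u, e)` with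
`e = {u, v}` and `u ≠ v`. -/
def I2 (G : SimpleGraph V) (v : V) : Set (Inc G) :=
  {i | i.1.1 ≠ v ∧ i.1.2 = s(i.1.1, v)}

/-- A vi-simultaneous `(k, s)`-coloring: a vi-simultaneous proper `k`-coloring in which at
most `s` distinct colors appear on `I₂(v)` for every vertex `v`. -/
def IsVISColoring (G : SimpleGraph V) (s : ℕ) {k : ℕ} (c : VIElem G → Fin k) : Prop :=
  IsVIColoring G c ∧ ∀ v : V, ((fun i => c (Sum.inr i)) '' I2 G v).ncard ≤ s

/-- `χ_{vi,s}(G)`: the least `k` admitting a vi-simultaneous `(k, s)`-coloring. -/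
noncomputable def chiVIS (G : SimpleGraph V) (s : ℕ) : ℕ :=
  sInf {k | ∃ c : VIElem G → Fin k, IsVISColoring G s c}

/-- The maximum degree `Δ(G)` of a finite graph. -/
noncomputable def maxDeg [Fintype V] (G : SimpleGraph V) : ℕ :=
  Finset.univ.sup fun v => (G.neighborSet v).ncard

/-!
Upper bound: colour the incidence `(u, uv)` by `v` and the vertex `v` by `σ v`, where `σ` is an
injective map sending every vertex to a vertex other than itself and outside its neighbourhood
(for `K_{n,m}`, a rotation of each side). Then all of `I₂(v)` carries the single colour `v`.

Lower bound: in a `(k, 1)`-colouring each vertex `v` receives a single colour on `I₂(v)`. Two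
adjacent vertices `u, v` get different colours, because `(u, uv)` and `(v, uv)` share an edge;
two vertices with a common neighbour `w` get different colours, because `(w, wu)` and `(w, wv)`
share a vertex. In `K_{n,m}` any two vertices are of one of these kinds, so `n + m` colours are
needed.
-/

namespace Inc

variable {G : SimpleGraph V}

noncomputable def other (i : Inc G) : V := Sym2.Mem.other i.2.2

theorem mk_other (i : Inc G) : s(i.1.1, i.other) = i.1.2 := Sym2.other_spec i.2.2

theorem adj_other (i : Inc G) : G.Adj i.1.1 i.other := by
  rw [← SimpleGraph.mem_edgeSet, mk_other]
  exact i.2.1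

theorem other_eq_of_mem_I2 {v : V} {i : Inc G} (hi : i ∈ I2 G v) : i.other = v := by
  obtain ⟨hne, hedge⟩ := hi
  have h := i.mk_other
  rw [hedge, Sym2.eq_iff] at h
  rcases h with ⟨-, h⟩ | ⟨h, -⟩
  · exact h
  · exact absurd h hne

theorem eq_of_other_eq {i j : Inc G} (hfst : i.1.1 = j.1.1) (hother : i.other = j.other) :
    i = j :=
  Subtype.ext (Prod.ext hfst (by rw [← i.mk_other, ← j.mk_other, hfst, hother]))

def ofAdj {u v : V} (h : G.Adj u v) : Inc G := ⟨(u, s(u, v)), h, Sym2.mem_mk_left u v⟩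

theorem ofAdj_mem_I2 {u v : V} (h : G.Adj u v) : ofAdj h ∈ I2 G v := ⟨h.ne, rfl⟩

end Inc

section UpperBound

variable {G : SimpleGraph V} {k : ℕ}

noncomputable def otherEndColoring (G : SimpleGraph V) (e : V ≃ Fin k) (σ : V → V) :
    VIElem G → Fin k
  | Sum.inl v => e (σ v)
  | Sum.inr i => e i.other

theorem not_viAdj_of_other_eq {i j : Inc G} (h : i.other = j.other) :
    ¬VIAdj G (Sum.inr i) (Sum.inr j) := by
  rintro ⟨hne, hcase⟩
  have hi := i.mk_other
  have hj := j.mk_other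
  have hi_ne := i.adj_other.ne
  have hj_ne := j.adj_other.ne
  rw [h] at hi hi_ne
  rcases hcase with hfst | hedge | hedge | hedge
  · exact hne (Inc.eq_of_other_eq hfst h)
  · rw [← hi, ← hj, Sym2.eq_iff] at hedge
    rcases hedge with ⟨hfst, -⟩ | ⟨hfst, -⟩
    · exact hne (Inc.eq_of_other_eq hfst h)
    · exact hi_ne hfst
  all_goals
    simp only [← hi, ← hj, Sym2.eq_iff] at hedge
    rcases hedge with ⟨-, hsnd⟩ | ⟨hfst, -⟩ <;> tauto

theorem isVISColoring_otherEndColoring (e : V ≃ Fin k) {σ : V → V} (hσ : Function.Injective σ)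
    (hσ_ne : ∀ v, σ v ≠ v) (hσ_adj : ∀ v, ¬G.Adj v (σ v)) :
    IsVISColoring G 1 (otherEndColoring G e σ) := by
  have vertex_inc : ∀ (u : V) (i : Inc G), u ∈ i.1.2 → e (σ u) ≠ e i.other := by
    intro u i hu hcol
    rw [e.apply_eq_iff_eq] at hcol
    rw [← i.mk_other, Sym2.mem_iff] at hu
    rcases hu with rfl | rfl
    · exact hσ_adj _ (hcol ▸ i.adj_other)
    · exact hσ_ne _ hcol
  refine ⟨?_, fun v => ?_⟩
  · rintro (u | i) (w | j) hadj
    · exact fun hcol => hadj.ne (hσ (e.injective hcol))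
    · exact vertex_inc u j hadj
    · exact (vertex_inc w i hadj).symm
    · exact fun hcol => not_viAdj_of_other_eq (e.injective hcol) hadj
  · have hsub : (fun i => otherEndColoring G e σ (Sum.inr i)) '' I2 G v ⊆ {e v} := by
      rintro _ ⟨i, hi, rfl⟩
      simp [otherEndColoring, Inc.other_eq_of_mem_I2 hi]
    exact (Set.ncard_le_ncard hsub (Set.toFinite _)).trans (Set.ncard_singleton _).le

end UpperBound

section LowerBound

variable {G : SimpleGraph V} {k : ℕ} {c : VIElem G → Fin k}

theorem IsVISColoring.color_eq_of_mem_I2 (hc : IsVISColoring G 1 c) {v : V} {i j : Inc G}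
    (hi : i ∈ I2 G v) (hj : j ∈ I2 G v) : c (Sum.inr i) = c (Sum.inr j) :=
  (Set.ncard_le_one_iff (Set.toFinite _)).1 (hc.2 v) ⟨i, hi, rfl⟩ ⟨j, hj, rfl⟩

theorem viAdj_ofAdj_symm {u v : V} (h : G.Adj u v) :
    VIAdj G (Sum.inr (Inc.ofAdj h)) (Sum.inr (Inc.ofAdj h.symm)) :=
  ⟨fun heq => h.ne (congrArg (fun i : Inc G => i.1.1) heq), Or.inr (Or.inl Sym2.eq_swap)⟩

theorem viAdj_ofAdj_of_ne {w u v : V} (hu : G.Adj w u) (hv : G.Adj w v) (huv : u ≠ v) :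
    VIAdj G (Sum.inr (Inc.ofAdj hu)) (Sum.inr (Inc.ofAdj hv)) := by
  refine ⟨fun heq => huv ?_, Or.inl rfl⟩
  have hedge : s(w, u) = s(w, v) := congrArg (fun i : Inc G => i.1.2) heq
  rw [Sym2.eq_iff] at hedge
  rcases hedge with ⟨-, h⟩ | ⟨rfl, rfl⟩
  · exact h
  · rfl

theorem card_le_of_isVISColoring_one [Fintype V] (hc : IsVISColoring G 1 c)
    (hnb : ∀ v, ∃ w, G.Adj w v)
    (hclose : ∀ u v, u ≠ v → G.Adj u v ∨ ∃ w, G.Adj w u ∧ G.Adj w v) :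
    Fintype.card V ≤ k := by
  choose nb hnb using hnb
  let g : V → Fin k := fun v => c (Sum.inr (Inc.ofAdj (hnb v)))
  have hg : ∀ {v : V} {i : Inc G}, i ∈ I2 G v → g v = c (Sum.inr i) :=
    fun hi => hc.color_eq_of_mem_I2 (Inc.ofAdj_mem_I2 _) hi
  suffices Function.Injective g by simpa using Fintype.card_le_of_injective g this
  intro u v hguv
  by_contra huv
  rcases hclose u v huv with hadj | ⟨w, hwu, hwv⟩
  · refine hc.1 _ _ (viAdj_ofAdj_symm hadj) ?_
    rw [← hg (Inc.ofAdj_mem_I2 hadj), ← hg (Inc.ofAdj_mem_I2 hadj.symm), hguv]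
  · refine hc.1 _ _ (viAdj_ofAdj_of_ne hwu hwv huv) ?_
    rw [← hg (Inc.ofAdj_mem_I2 hwu), ← hg (Inc.ofAdj_mem_I2 hwv), hguv]

end LowerBound

theorem chiVIS_one_eq_card [Fintype V] {G : SimpleGraph V} {σ : V → V}
    (hσ : Function.Injective σ) (hσ_ne : ∀ v, σ v ≠ v) (hσ_adj : ∀ v, ¬G.Adj v (σ v))
    (hclose : ∀ u v, u ≠ v → G.Adj u v ∨ ∃ w, G.Adj w u ∧ G.Adj w v) :
    chiVIS G 1 = Fintype.card V := by
  have hcol := isVISColoring_otherEndColoring (G := G) (Fintype.equivFin V) hσ hσ_ne hσ_adj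
  have hnb : ∀ v, ∃ w, G.Adj w v := fun v =>
    ((hclose v (σ v) (hσ_ne v).symm).resolve_left (hσ_adj v)).imp fun _ h => h.1
  refine le_antisymm (Nat.sInf_le ⟨_, hcol⟩) (le_csInf ⟨_, _, hcol⟩ ?_)
  rintro k ⟨c, hc⟩
  exact card_le_of_isVISColoring_one hc hnb hclose

theorem completeBipartiteGraph_adj_or_exists_common_adj {α β : Type*} [Nonempty α] [Nonempty β]
    (u v : α ⊕ β) :
    (completeBipartiteGraph α β).Adj u v ∨
      ∃ w, (completeBipartiteGraph α β).Adj w u ∧ (completeBipartiteGraph α β).Adj w v := by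
  rcases u with a | b <;> rcases v with a' | b'
  · exact Or.inr ⟨Sum.inr (Classical.arbitrary β), by simp, by simp⟩
  · exact Or.inl (by simp)
  · exact Or.inl (by simp)
  · exact Or.inr ⟨Sum.inl (Classical.arbitrary α), by simp, by simp⟩

/-- For all integers `n, m ≥ 2`, the complete bipartite graph `K_{n,m}`
satisfies `χ_{vi,1}(K_{n,m}) = n + m`. -/
theorem chiVIS_one_completeBipartite (n m : ℕ) (hn : 2 ≤ n) (hm : 2 ≤ m) :
    chiVIS (completeBipartiteGraph (Fin n) (Fin m)) 1 = n + m := by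
  have : NeZero n := ⟨by omega⟩
  have : NeZero m := ⟨by omega⟩
  let σ : Fin n ⊕ Fin m → Fin n ⊕ Fin m := Sum.map (finRotate n) (finRotate m)
  have hσ_ne : ∀ v, σ v ≠ v := by
    rintro (i | j) <;> simp [σ] <;> omega
  have hσ_adj : ∀ v, ¬(completeBipartiteGraph (Fin n) (Fin m)).Adj v (σ v) := by
    rintro (i | j) <;> simp [σ]
  rw [chiVIS_one_eq_card (Sum.map_injective.2 ⟨(finRotate n).injective, (finRotate m).injective⟩)
    hσ_ne hσ_adj fun u v _ => completeBipartiteGraph_adj_or_exists_common_adj u v]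
  simp
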